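/- Let U ⊆ ℝ^{n-1} be open, and let X : U → ℝⁿ \ {0} and N : U → ℝⁿ be continuously differentiable maps such that ‖N(u)‖ = 1, ⟨N(u), ∂_α X(u)⟩ = 0 for all α, and ⟨X(u), N(u)⟩ < 0 for all u ∈ U. Define X* = N/(-⟨X,N⟩) and N* = X/‖X‖, and suppose that at a point u ∈ U the determinants det(N, ∂₁X, …, ∂_{n-1}X) and det(N*, ∂₁X*, …, ∂_{n-1}X*) are nonzero. Define the Gauss curvatures κ = |det(N, ∂₁N, …, ∂_{n-1}N) / det(N, ∂₁X, …, ∂_{n-1}X)| and κ* = |det(N*, ∂₁N*, …, ∂_{n-1}N*) / det(N*, ∂₁X*, …, ∂_{n-1}X*)|. Then κ · κ* = ⟨X,N⟩^{n+1} ⟨X*,N*⟩^{n+1}. -/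

import Mathlib

/-!
Write `a = X u`, `b = N u`, `t = ⟪a, b⟫`. Adding multiples of the first column to the others does
not change a determinant, and `∂(φ • F) = φ ∂F + (∂φ) F`; hence `det(N*, ∂N*) = ‖a‖⁻ⁿ det(a, ∂X)` and
`det(b, ∂X*) = (-t)^{-(n-1)} det(b, ∂N)`. If all columns but the first are orthogonal to `c`, the
determinant depends on the first column `x` only through `⟪c, x⟫`. Applied with `c = b` (since
`∂X ⊥ N`) this gives `det(a, ∂X) = t det(b, ∂X)`; applied with `c = a` it gives
`‖a‖² det(b, ∂X*) = t det(a, ∂X*)`, because differentiating `⟪X, X*⟫ = -1` yields `∂X* ⊥ X`.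
Both curvature quotients are then explicit, and their product is `(-t / ‖a‖)^{n+1}`.
-/

open Set RealInnerProductSpace

noncomputable section

/-- The determinant of the `n × n` matrix whose columns are `v 0, …, v (n-1)`. -/
def detCols {n : ℕ} (v : Fin n → EuclideanSpace ℝ (Fin n)) : ℝ :=
  Matrix.det (Matrix.of fun i j => v j i)

/-- The partial derivative `∂_α f (u)` of a map between Euclidean spaces. -/
def pderiv' {m n : ℕ} (f : EuclideanSpace ℝ (Fin m) → EuclideanSpace ℝ (Fin n))
    (u : EuclideanSpace ℝ (Fin m)) (α : Fin m) : EuclideanSpace ℝ (Fin n) :=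
  fderiv ℝ f u (EuclideanSpace.single α 1)

open Filter Topology

def detColsMap (n : ℕ) : EuclideanSpace ℝ (Fin n) [⋀^Fin n]→ₗ[ℝ] ℝ :=
  (EuclideanSpace.basisFun (Fin n) ℝ).toBasis.det

lemma detColsMap_apply {n : ℕ} (v : Fin n → EuclideanSpace ℝ (Fin n)) :
    detColsMap n v = detCols v := by
  simp [detColsMap, detCols, Module.Basis.det_apply]
  rfl

section Determinants

variable {n : ℕ}

lemma detCols_smul (s : Fin n → ℝ) (v : Fin n → EuclideanSpace ℝ (Fin n)) :
    detCols (fun j => s j • v j) = (∏ j, s j) * detCols v := by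
  simpa [detCols] using Matrix.det_mul_row s (Matrix.of fun i j => v j i)

lemma detCols_eq_zero_of_forall_inner_eq_zero {v : Fin n → EuclideanSpace ℝ (Fin n)}
    {c : EuclideanSpace ℝ (Fin n)} (hc : c ≠ 0) (hv : ∀ j, ⟪c, v j⟫ = 0) :
    detCols v = 0 := by
  rw [detCols, ← Matrix.det_transpose, ← Matrix.exists_mulVec_eq_zero_iff]
  refine ⟨c.ofLp, fun h => hc (by ext i; exact congrFun h i), funext fun j => ?_⟩
  simpa [Matrix.mulVec, dotProduct, PiLp.inner_apply, mul_comm] using hv j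

variable (x : EuclideanSpace ℝ (Fin (n + 1))) (w : Fin n → EuclideanSpace ℝ (Fin (n + 1)))

lemma detCols_cons_smul_head (r : ℝ) :
    detCols (Fin.cons (r • x) w) = r * detCols (Fin.cons x w) := by
  have h := detCols_smul (Fin.cons r 1) (Fin.cons x w)
  rw [Fin.prod_cons] at h
  convert h using 2 <;> [skip; simp]
  ext j : 1
  refine Fin.cases ?_ (fun _ => ?_) j <;> simp

lemma detCols_cons_smul_tail (r : ℝ) :
    detCols (Fin.cons x fun α => r • w α) = r ^ n * detCols (Fin.cons x w) := by
  have h := detCols_smul (Fin.cons 1 fun _ => r) (Fin.cons x w)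
  rw [Fin.prod_cons] at h
  convert h using 2 <;> [skip; simp]
  ext j : 1
  refine Fin.cases ?_ (fun _ => ?_) j <;> simp

lemma detCols_cons_add_smul_tail (g : Fin n → ℝ) :
    detCols (Fin.cons x fun α => w α + g α • x) = detCols (Fin.cons x w) := by
  rw [detCols, detCols, ← Matrix.det_transpose, ← Matrix.det_transpose (Matrix.of _)]
  refine Matrix.det_eq_of_forall_row_eq_smul_add_const (Fin.cons 0 g) 0 rfl fun i j => ?_
  refine Fin.cases ?_ (fun α => ?_) i <;> simp

/-- `‖c‖² x - ⟪c, x⟫ c` is orthogonal to `c`, as are the columns `w`. -/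
lemma detCols_cons_mul_norm_sq (c : EuclideanSpace ℝ (Fin (n + 1))) (hw : ∀ α, ⟪c, w α⟫ = 0) :
    ‖c‖ ^ 2 * detCols (Fin.cons x w) = ⟪c, x⟫ * detCols (Fin.cons c w) := by
  rcases eq_or_ne c 0 with rfl | hc
  · simp
  have hzero : detCols (Fin.cons (‖c‖ ^ 2 • x - ⟪c, x⟫ • c) w) = 0 := by
    refine detCols_eq_zero_of_forall_inner_eq_zero hc fun j => Fin.cases ?_ hw j
    simp [inner_sub_right, real_inner_smul_right, mul_comm]
  rw [← sub_eq_zero, ← hzero, ← detColsMap_apply, ← detColsMap_apply, ← detColsMap_apply]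
  change _ = (detColsMap (n + 1)).curryLeft (‖c‖ ^ 2 • x - ⟪c, x⟫ • c) w
  simp only [map_sub, map_smul, AlternatingMap.sub_apply, AlternatingMap.smul_apply,
    AlternatingMap.curryLeft_apply_apply, smul_eq_mul]
  rfl

end Determinants

section PartialDerivatives

variable {m k : ℕ} {u : EuclideanSpace ℝ (Fin m)}

lemma pderiv'_smul {φ : EuclideanSpace ℝ (Fin m) → ℝ}
    {F : EuclideanSpace ℝ (Fin m) → EuclideanSpace ℝ (Fin k)}
    (hφ : DifferentiableAt ℝ φ u) (hF : DifferentiableAt ℝ F u) (α : Fin m) :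
    pderiv' (fun v => φ v • F v) u α
      = φ u • pderiv' F u α + fderiv ℝ φ u (EuclideanSpace.single α 1) • F u := by
  simp [pderiv', fderiv_fun_smul hφ hF]

lemma inner_pderiv'_eq_neg_of_eventually_eq
    {F G : EuclideanSpace ℝ (Fin m) → EuclideanSpace ℝ (Fin k)} {c : ℝ}
    (hF : DifferentiableAt ℝ F u) (hG : DifferentiableAt ℝ G u)
    (hFG : ∀ᶠ v in 𝓝 u, ⟪F v, G v⟫ = c) (α : Fin m) :
    ⟪F u, pderiv' G u α⟫ = -⟪pderiv' F u α, G u⟫ := by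
  have h := fderiv_inner_apply ℝ hF hG (EuclideanSpace.single α 1)
  rw [Filter.EventuallyEq.fderiv_eq (f := fun _ => c) hFG, fderiv_const_apply, zero_apply] at h
  rw [pderiv', pderiv']
  linarith

lemma detCols_cons_pderiv'_smul {φ : EuclideanSpace ℝ (Fin m) → ℝ}
    {F : EuclideanSpace ℝ (Fin m) → EuclideanSpace ℝ (Fin (m + 1))}
    (hφ : DifferentiableAt ℝ φ u) (hF : DifferentiableAt ℝ F u) :
    detCols (Fin.cons (F u) fun α => pderiv' (fun v => φ v • F v) u α)
      = φ u ^ m * detCols (Fin.cons (F u) fun α => pderiv' F u α) := by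
  simp only [pderiv'_smul hφ hF, detCols_cons_add_smul_tail, detCols_cons_smul_tail]

lemma detCols_cons_normalize_pderiv'
    {X : EuclideanSpace ℝ (Fin m) → EuclideanSpace ℝ (Fin (m + 1))}
    (hX : DifferentiableAt ℝ X u) (hXu : X u ≠ 0) :
    detCols (Fin.cons (‖X u‖⁻¹ • X u) fun α => pderiv' (fun v => ‖X v‖⁻¹ • X v) u α)
      = ‖X u‖⁻¹ ^ (m + 1) * detCols (Fin.cons (X u) fun α => pderiv' X u α) := by
  rw [detCols_cons_smul_head,
    detCols_cons_pderiv'_smul ((hX.norm ℝ hXu).fun_inv (norm_ne_zero_iff.2 hXu)) hX, pow_succ']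
  ring

/-- Differentiate `⟪X, X*⟫ = -1`, where `X* = N / (-⟪X, N⟫)`, and use `∂X ⊥ N`. -/
lemma inner_pderiv'_copolar_eq_zero {X N : EuclideanSpace ℝ (Fin m) → EuclideanSpace ℝ (Fin k)}
    (hX : DifferentiableAt ℝ X u) (hN : DifferentiableAt ℝ N u)
    (hXN : ∀ᶠ v in 𝓝 u, ⟪X v, N v⟫ ≠ 0) (hOrth : ∀ α, ⟪N u, pderiv' X u α⟫ = 0) (α : Fin m) :
    ⟪X u, pderiv' (fun v => (-⟪X v, N v⟫)⁻¹ • N v) u α⟫ = 0 := by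
  have hψ : DifferentiableAt ℝ (fun v => (-⟪X v, N v⟫)⁻¹) u :=
    (hX.inner ℝ hN).fun_neg.fun_inv (neg_ne_zero.2 hXN.self_of_nhds)
  rw [inner_pderiv'_eq_neg_of_eventually_eq hX (hψ.fun_smul hN) (c := -1) ?_,
    real_inner_smul_right, real_inner_comm (N u) (pderiv' X u α), hOrth, mul_zero, neg_zero]
  filter_upwards [hXN] with v hv
  rw [real_inner_smul_right, inv_neg, neg_mul, inv_mul_cancel₀ hv]

end PartialDerivatives

/-- With `n = m + 1`: in the situation of Statements 15/16, if at `u ∈ U`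
the determinants `det(N, ∂X)` and `det(N*, ∂X*)` are nonzero, the Gauss curvatures
`κ = |det(N,∂N)/det(N,∂X)|` and `κ* = |det(N*,∂N*)/det(N*,∂X*)|` satisfy
`κ·κ* = ⟨X,N⟩^{n+1} ⟨X*,N*⟩^{n+1}`. -/
theorem gauss_curvature_product {m : ℕ}
    (U : Set (EuclideanSpace ℝ (Fin m))) (hU : IsOpen U)
    (X N : EuclideanSpace ℝ (Fin m) → EuclideanSpace ℝ (Fin (m + 1)))
    (hX : ContDiffOn ℝ 1 X U) (hN : ContDiffOn ℝ 1 N U)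
    (hX0 : ∀ u ∈ U, X u ≠ 0)
    (hNnorm : ∀ u ∈ U, ‖N u‖ = 1)
    (hOrth : ∀ u ∈ U, ∀ α : Fin m, ⟪N u, pderiv' X u α⟫ = (0 : ℝ))
    (hneg : ∀ u ∈ U, ⟪X u, N u⟫ < (0 : ℝ))
    (u : EuclideanSpace ℝ (Fin m)) (hu : u ∈ U)
    (hd : detCols (Fin.cons (N u) (fun α => pderiv' X u α)) ≠ 0)
    (hd' : detCols (Fin.cons (‖X u‖⁻¹ • X u)
        (fun α => pderiv' (fun v => (-(⟪X v, N v⟫ : ℝ))⁻¹ • N v) u α)) ≠ 0) :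
    |detCols (Fin.cons (N u) (fun α => pderiv' N u α)) /
        detCols (Fin.cons (N u) (fun α => pderiv' X u α))| *
      |detCols (Fin.cons (‖X u‖⁻¹ • X u)
            (fun α => pderiv' (fun v => ‖X v‖⁻¹ • X v) u α)) /
          detCols (Fin.cons (‖X u‖⁻¹ • X u)
            (fun α => pderiv' (fun v => (-(⟪X v, N v⟫ : ℝ))⁻¹ • N v) u α))|
      = (⟪X u, N u⟫ : ℝ) ^ (m + 2) *
          (⟪(-(⟪X u, N u⟫ : ℝ))⁻¹ • N u, ‖X u‖⁻¹ • X u⟫ : ℝ) ^ (m + 2) := by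
  have hUu : U ∈ 𝓝 u := hU.mem_nhds hu
  have hXd : DifferentiableAt ℝ X u := (hX.contDiffAt hUu).differentiableAt one_ne_zero
  have hNd : DifferentiableAt ℝ N u := (hN.contDiffAt hUu).differentiableAt one_ne_zero
  have hXN : ∀ᶠ v in 𝓝 u, ⟪X v, N v⟫ ≠ 0 := mem_of_superset hUu fun v hv => (hneg v hv).ne
  have hXP := detCols_cons_mul_norm_sq (X u) _ (N u) (hOrth u hu)
  rw [hNnorm u hu, one_pow, one_mul, real_inner_comm] at hXP
  have hXstar := detCols_cons_mul_norm_sq (N u) _ (X u)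
    (inner_pderiv'_copolar_eq_zero hXd hNd hXN (hOrth u hu))
  rw [detCols_cons_pderiv'_smul ((hXd.inner ℝ hNd).fun_neg.fun_inv (neg_ne_zero.2 (hneg u hu).ne)) hNd]
    at hXstar
  rw [detCols_cons_normalize_pderiv' hXd (hX0 u hu), hXP, detCols_cons_smul_head,
    real_inner_smul_left, real_inner_smul_right, real_inner_comm (X u) (N u)]
  rw [detCols_cons_smul_head] at hd'
  have hr : 0 < ‖X u‖ := norm_pos_iff.2 (hX0 u hu)
  have ht := hneg u hu
  set r := ‖X u‖
  set t := ⟪X u, N u⟫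
  set DP := detCols (Fin.cons (N u) fun α => pderiv' X u α)
  set DQ := detCols (Fin.cons (N u) fun α => pderiv' N u α)
  set K := detCols (Fin.cons (X u) fun α => pderiv' (fun v => (-⟪X v, N v⟫)⁻¹ • N v) u α)
  have hK : K = r ^ 2 * ((-t)⁻¹ ^ m * DQ) / t := by rw [hXstar]; field_simp [ht.ne]
  have hDQ : DQ ≠ 0 := by rintro hDQ; simp [hK, hDQ] at hd'
  have hratio : r⁻¹ ^ (m + 1) * (t * DP) / (r⁻¹ * K) = (-t / r) ^ (m + 2) * (DP / DQ) := by
    rw [hK, inv_pow, inv_pow, div_pow]; field_simp [ht.ne, hr.ne']; ring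
  have hrhs : t ^ (m + 2) * ((-t)⁻¹ * (r⁻¹ * t)) ^ (m + 2) = (-t / r) ^ (m + 2) := by
    rw [← mul_pow]; congr 1; field_simp [ht.ne, hr.ne']
  rw [hratio, hrhs, abs_mul, abs_of_nonneg (pow_nonneg (div_nonneg (by linarith) hr.le) _),
    mul_left_comm, ← abs_mul, div_mul_div_cancel₀ hd, div_self hDQ, abs_one, mul_one]
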